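/- For every complex z with |z| < 1, the series sum over k≥1 of z^(2k)/((2k-1)(2k)(2k+1)) equals (1/2)ln(1-z²) + (1/2)(z + 1/z)·arctanh(z) - 1/2. -/

import Mathlib

noncomputable def carctanh (z : ℂ) : ℂ := (1 / 2) * Complex.log ((1 + z) / (1 - z))

/-!
By partial fractions, `1 / ((2k+1)(2k+2)(2k+3)) = ½ (1/(2k+1) - 2/(2k+2) + 1/(2k+3))`. Hence the
series splits into `z/2` times the odd series `∑ z^(2k+1)/(2k+1) = arctanh z`, minus half the
logarithmic series `∑ (z²)^(k+1)/(k+1) = -log (1 - z²)`, plus `1/(2z)` times the same odd series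
with its first term `z` removed.
-/

open Complex

lemma carctanh_eq_I_mul_arctan (z : ℂ) : carctanh z = I * arctan (-I * z) := by
  have h : -I * z * I = z := by ring_nf; rw [I_sq]; ring
  rw [carctanh, arctan, h, ← mul_assoc, mul_div_assoc', mul_neg, I_mul_I]
  ring

lemma hasSum_carctanh {z : ℂ} (hz : ‖z‖ < 1) :
    HasSum (fun k : ℕ ↦ z ^ (2 * k + 1) / (2 * k + 1)) (carctanh z) := by
  rw [carctanh_eq_I_mul_arctan]
  refine ((hasSum_arctan (z := -I * z) (by simpa using hz)).mul_left I).congr_fun fun k ↦ ?_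
  have hI : (-I) ^ (2 * k + 1) = -I * (-1) ^ k := by rw [pow_succ, pow_mul, neg_sq, I_sq]; ring
  have hsign : ((-1 : ℂ) ^ k) ^ 2 = 1 := by rw [← pow_mul, mul_comm, pow_mul]; simp
  rw [mul_pow, hI]
  push_cast
  linear_combination (z ^ (2 * k + 1) / (2 * k + 1) * ((-1) ^ k) ^ 2) * I_sq
    - (z ^ (2 * k + 1) / (2 * k + 1)) * hsign

lemma hasSum_carctanh_sub_self {z : ℂ} (hz : ‖z‖ < 1) :
    HasSum (fun k : ℕ ↦ z ^ (2 * k + 3) / (2 * k + 3)) (carctanh z - z) := by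
  have := (hasSum_nat_add_iff (f := fun k : ℕ ↦ z ^ (2 * k + 1) / (2 * k + 1)) 1
    (g := carctanh z - z)).mpr (by simpa using hasSum_carctanh hz)
  refine this.congr_fun fun k ↦ ?_
  rw [show 2 * (k + 1) + 1 = 2 * k + 3 by ring]
  push_cast
  ring

lemma pow_div_partialFractions {K : Type*} [Field K] [CharZero K] {z : K} (hz : z ≠ 0) (k : ℕ) :
    z ^ (2 * k + 2) / ((2 * (k : K) + 1) * (2 * k + 2) * (2 * k + 3)) =
      z / 2 * (z ^ (2 * k + 1) / (2 * k + 1)) - 1 / 2 * ((z ^ 2) ^ (k + 1) / (k + 1))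
        + 1 / (2 * z) * (z ^ (2 * k + 3) / (2 * k + 3)) := by
  have h1 : (2 * (k : K) + 1) ≠ 0 := by norm_cast
  have h2 : ((k : K) + 1) ≠ 0 := by norm_cast
  have h3 : (2 * (k : K) + 3) ≠ 0 := by norm_cast
  have h4 : (2 * (k : K) + 2) ≠ 0 := by norm_cast
  rw [← pow_mul]
  field_simp
  ring

theorem stmt_6 (z : ℂ) (hz : z ≠ 0) (h : ‖z‖ < 1) :
    ∑' k : ℕ, z ^ (2 * k + 2) / ((2 * (k : ℂ) + 1) * (2 * k + 2) * (2 * k + 3)) =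
      (1 / 2) * Complex.log (1 - z ^ 2) + (1 / 2) * (z + 1 / z) * carctanh z - 1 / 2 := by
  have hz2 : ‖z ^ 2‖ < 1 := by simpa using pow_lt_one₀ (norm_nonneg z) h two_ne_zero
  have H := (((hasSum_carctanh h).mul_left (z / 2)).sub
    ((hasSum_taylorSeries_neg_log' hz2).mul_left (1 / 2))).add
    ((hasSum_carctanh_sub_self h).mul_left (1 / (2 * z)))
  rw [← funext (pow_div_partialFractions hz)] at H
  rw [H.tsum_eq]
  field_simp
  ring
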